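/- Let (Ω^{p,q}, d_h, d_v) be a truncated bicomplex of real vector spaces and suppose that for each p with 2 ≤ p ≤ m there is a (possibly different) homotopy operator P_p for the row p. Let λ ∈ Ω^{0,m} and ω₁ ∈ Ω^{1,m−1} satisfy d_v λ + d_h ω₁ = 0, and define recursively ω_{p+1} = −P_{p+1}(d_v ω_p) ∈ Ω^{p+1,m−p−1} for 1 ≤ p ≤ m−1. If d_h : Ω^{m+1,0} → Ω^{m+1,1} is injective, then d_v ω_p + d_h ω_{p+1} = 0 for all 1 ≤ p ≤ m−1 and d_v ω_m = 0. (This is the generalisation noted in the paper: the homotopy operators used in each contact degree need not coincide, and the extended form θ^F = λ + ω₁ + ⋯ + ω_m still satisfies the closure property.) -/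
import Mathlib


/-- the closure property for the extension of a Lepage equivalent using possibly
different homotopy operators `P_p` in each contact degree `2 ≤ p ≤ m`.

We model the truncated variational bicomplex with `m = n + 1 ≥ 1`: real vector spaces
`Ω p q` (only the range `q ≤ m` matters; the horizontal differential `dh` is only defined
for `q < m`, as witnessed by the proof argument), a vertical differential `dv`, with
`dh ∘ dh = 0`, `dv ∘ dv = 0` and `dh ∘ dv + dv ∘ dh = 0` whenever defined.  For each row
`p` with `2 ≤ p ≤ m` there is a homotopy operator `P p q : Ω p (q+1) → Ω p q` (for
`q + 1 ≤ m`) with `dh ∘ P + P ∘ dh = id` on `Ω p q` for `1 ≤ q ≤ m − 1`; the operators for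
different rows are unrelated.

The form `ω p q` (with `p + q = n`, so living in `Ω (p+1) q`) plays the rôle of
`ω_{p+1} ∈ Ω^{p+1, m−(p+1)}`; thus `λ ∈ Ω^{0,m}` and `ω₁ = ω 0 n ∈ Ω^{1,m−1}` satisfy
`d_v λ + d_h ω₁ = 0`, and `ω_{p+1} = −P_{p+1} (d_v ω_p)` recursively.  Assuming that
`d_h : Ω^{m+1,0} → Ω^{m+1,1}` is injective, the conclusion is that
`d_v ω_p + d_h ω_{p+1} = 0` for all `1 ≤ p ≤ m − 1` and `d_v ω_m = 0`, so that the form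
`θ^F = λ + ω₁ + ⋯ + ω_m` still satisfies the closure property. -/
theorem lepage_extension_closure_property_varying_homotopies
    (n : ℕ)
    (Ω : ℕ → ℕ → Type) [∀ p q, AddCommGroup (Ω p q)] [∀ p q, Module ℝ (Ω p q)]
    (dh : ∀ p q, q < n + 1 → (Ω p q →ₗ[ℝ] Ω p (q + 1)))
    (dv : ∀ p q, Ω p q →ₗ[ℝ] Ω (p + 1) q)
    (hdhdh : ∀ p q (h1 : q < n + 1) (h2 : q + 1 < n + 1) (x : Ω p q),
      dh p (q + 1) h2 (dh p q h1 x) = 0)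
    (hdvdv : ∀ p q (x : Ω p q), dv (p + 1) q (dv p q x) = 0)
    (hdhdv : ∀ p q (h : q < n + 1) (x : Ω p q),
      dh (p + 1) q h (dv p q x) + dv p (q + 1) (dh p q h x) = 0)
    (P : ∀ p q, 2 ≤ p → p ≤ n + 1 → q < n + 1 → (Ω p (q + 1) →ₗ[ℝ] Ω p q))
    (hP : ∀ p q (hp : 2 ≤ p) (hpm : p ≤ n + 1) (h1 : q < n + 1) (h2 : q + 1 < n + 1)
      (x : Ω p (q + 1)),
      dh p q h1 (P p q hp hpm h1 x) + P p (q + 1) hp hpm h2 (dh p (q + 1) h2 x) = x)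
    (hinj : Function.Injective (dh (n + 2) 0 (by omega)))
    (lam : Ω 0 (n + 1))
    (ω : ∀ p q, p + q = n → Ω (p + 1) q)
    (hstart : dv 0 (n + 1) lam + dh 1 n (by omega) (ω 0 n (by omega)) = 0)
    (hrec : ∀ p q (h : p + (q + 1) = n),
      ω (p + 1) q (by omega) =
        - P (p + 2) q (by omega) (by omega) (by omega)
            (dv (p + 1) (q + 1) (ω p (q + 1) (by omega)))) :
    (∀ p q (h : p + (q + 1) = n),
      dv (p + 1) (q + 1) (ω p (q + 1) (by omega)) +
        dh (p + 2) q (by omega) (ω (p + 1) q (by omega)) = 0) ∧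
    dv (n + 1) 0 (ω n 0 (by omega)) = 0 := by
  have key : ∀ p q (h : p + (q + 1) = n),
      dv (p + 1) (q + 1) (ω p (q + 1) (by omega)) +
        dh (p + 2) q (by omega) (ω (p + 1) q (by omega)) = 0 := by
    intro p
    induction p with
    | zero =>
      intro q h
      obtain rfl : n = q + 1 := by omega
      have hstep : dh 1 (q + 1) (by omega) (ω 0 (q + 1) (by omega)) =
          - dv 0 (q + 1 + 1) lam :=
        eq_neg_of_add_eq_zero_right hstart
      have hdx : dh 2 (q + 1) (by omega)
          (dv 1 (q + 1) (ω 0 (q + 1) (by omega))) = 0 := by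
        have h1 := hdhdv 1 (q + 1) (by omega) (ω 0 (q + 1) (by omega))
        rw [hstep] at h1
        simp only [map_neg, hdvdv, neg_zero, add_zero] at h1
        exact h1
      have h2 := hP 2 q (by omega) (by omega) (by omega) (by omega)
        (dv 1 (q + 1) (ω 0 (q + 1) (by omega)))
      rw [hdx] at h2
      simp only [map_zero, add_zero] at h2
      rw [hrec 0 q (by omega), map_neg, h2]
      abel
    | succ p IH =>
      intro q h
      have IH' := IH (q + 1) (by omega)
      have h3 : dh (p + 2) (q + 1) (by omega) (ω (p + 1) (q + 1) (by omega)) =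
          - dv (p + 1) (q + 1 + 1) (ω p (q + 1 + 1) (by omega)) :=
        eq_neg_of_add_eq_zero_right IH'
      have hdx : dh (p + 3) (q + 1) (by omega)
          (dv (p + 2) (q + 1) (ω (p + 1) (q + 1) (by omega))) = 0 := by
        have h1 := hdhdv (p + 2) (q + 1) (by omega) (ω (p + 1) (q + 1) (by omega))
        rw [h3] at h1
        simp only [map_neg, hdvdv, neg_zero, add_zero] at h1
        exact h1
      have h2 := hP (p + 3) q (by omega) (by omega) (by omega) (by omega)
        (dv (p + 2) (q + 1) (ω (p + 1) (q + 1) (by omega)))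
      rw [hdx] at h2
      simp only [map_zero, add_zero] at h2
      rw [hrec (p + 1) q (by omega), map_neg, h2]
      abel
  refine ⟨key, ?_⟩
  obtain ⟨y, hy⟩ : ∃ y : Ω n 1, dh (n + 1) 0 (by omega) (ω n 0 (by omega)) =
      - dv n 1 y := by
    by_cases hn : n = 0
    · subst hn
      exact ⟨lam, eq_neg_of_add_eq_zero_right hstart⟩
    · obtain ⟨p, rfl⟩ := Nat.exists_eq_succ_of_ne_zero hn
      exact ⟨ω p 1 (by omega), eq_neg_of_add_eq_zero_right (key p 0 (by omega))⟩
  apply hinj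
  rw [map_zero]
  have h1 := hdhdv (n + 1) 0 (by omega) (ω n 0 (by omega))
  rw [hy] at h1
  simp only [map_neg, hdvdv, neg_zero, add_zero] at h1
  exact h1
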